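/- Let n ≥ 2, let p = n² + 3 be prime, let D be the squarefree part of n² + 4, and K = ℚ(√D) with ring of integers ℤ_K. Let u ∈ ℤ_Kˣ be a unit with N(u) = −1, let ℓ be an odd positive integer with u^{2ℓ} + u^{−2ℓ} + 1 = p, and put ∂ := 1 + u^ℓ + u^{−ℓ}, so that 𝔭 := ∂ℤ_K is a prime ideal with residue ring ℤ_K/𝔭 of cardinality p. Suppose the multiplicative order of the image of u in (ℤ_K/∂ℤ_K)ˣ is 3ℓ and the multiplicative order of the image of u in (ℤ_K/∂^τℤ_K)ˣ is 6ℓ. Then the image of −u in ℤ_K/∂ℤ_K is not a square in that ring, while the image of −u in ℤ_K/∂^τℤ_K is a square. -/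

import Mathlib

/-!
Put `v = u^ℓ`. Modulo `∂ = 1 + v + v⁻¹` we have `v² + v + 1 = 0`, hence `u^{3ℓ} = v³ = 1`;
modulo `2 − ∂ = 1 − v − v⁻¹` we have `v² − v + 1 = 0`, hence `u^{3ℓ} = −1`. As `3ℓ` is odd,
`−u = u^{3ℓ+1}` is a square modulo `2 − ∂`, while modulo `∂` the element `u` is a square,
so `−u` can only be a square if `−1` is. But `ℤ_K/∂` has prime cardinality
`p = n² + 3 ≡ 3 (mod 4)`, so it is `𝔽_p`, in which `−1` is not a square.
-/

open NumberField

theorem Nat.Prime.mod_four_eq_three_of_eq_sq_add_three {p n : ℕ} (hp : p.Prime)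
    (hpn : p = n ^ 2 + 3) : p % 4 = 3 := by
  obtain ⟨k, rfl | rfl⟩ := Nat.even_or_odd' n
  · subst hpn; ring_nf; omega
  · have h2p : 2 ∣ p := ⟨2 * k ^ 2 + 2 * k + 2, by rw [hpn]; ring⟩
    have := (Nat.prime_dvd_prime_iff_eq Nat.prime_two hp).mp h2p
    nlinarith

theorem not_isSquare_neg_one_of_natCard_eq {R : Type*} [Ring R] {p : ℕ} (hp : p.Prime)
    (hR : Nat.card R = p) (hp4 : p % 4 = 3) : ¬IsSquare (-1 : R) := by
  have : Fintype R := @Fintype.ofFinite R (Nat.finite_of_card_ne_zero (hR ▸ hp.ne_zero))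
  have : Fact p.Prime := ⟨hp⟩
  intro h
  have h' :=
    h.map (ZMod.ringEquivOfPrime R hp (Nat.card_eq_fintype_card (α := R) ▸ hR)).symm
  rw [map_neg, map_one] at h'
  exact ZMod.exists_sq_eq_neg_one_iff.mp h' hp4

theorem isSquare_neg_of_pow_eq_neg_one {M : Type*} [Monoid M] [HasDistribNeg M] {x : M}
    {k : ℕ} (hk : Odd k) (h : x ^ k = -1) : IsSquare (-x) := by
  have : -x = x ^ (k + 1) := by rw [pow_succ', h, mul_neg_one]
  exact this ▸ hk.add_one.isSquare_pow x

theorem not_isSquare_neg_of_pow_eq_one {M : Type*} [CommMonoid M] [HasDistribNeg M] {x : M}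
    {k : ℕ} (hM : ¬IsSquare (-1 : M)) (hk : Odd k) (h : x ^ k = 1) : ¬IsSquare (-x) := by
  intro hx
  have : (-1 : M) = -x * x ^ (k - 1) := by
    rw [neg_mul, ← pow_succ', Nat.sub_add_cancel hk.pos, h]
  exact hM (this ▸ hx.mul ((Nat.Odd.sub_odd hk odd_one).isSquare_pow x))

section Trinomial

variable {R : Type*} [CommRing R]

theorem pow_three_eq_one_of_one_add_add_eq_zero {a b : R} (hab : a * b = 1)
    (h : 1 + a + b = 0) : a ^ 3 = 1 := by
  linear_combination (a ^ 2 - a) * h - (a - 1) * hab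

theorem pow_three_eq_neg_one_of_add_eq_one {a b : R} (hab : a * b = 1) (h : a + b = 1) :
    a ^ 3 = -1 := by
  linear_combination (a ^ 2 + a) * h - (a + 1) * hab

variable (u : Rˣ) (ℓ : ℕ)

theorem mk_pow_mul_mk_inv_pow (I : Ideal R) :
    Ideal.Quotient.mk I (u : R) ^ ℓ * Ideal.Quotient.mk I ((u⁻¹ : Rˣ) : R) ^ ℓ = 1 := by
  rw [← mul_pow, ← map_mul, Units.mul_inv, map_one, one_pow]

theorem mk_pow_three_mul_eq_one_mod_one_add_pow_add_inv_pow :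
    Ideal.Quotient.mk (Ideal.span {1 + (u : R) ^ ℓ + ((u⁻¹ : Rˣ) : R) ^ ℓ}) (u : R) ^ (3 * ℓ)
      = 1 := by
  have h := Ideal.Quotient.eq_zero_iff_mem.mpr
    (Ideal.mem_span_singleton_self (1 + (u : R) ^ ℓ + ((u⁻¹ : Rˣ) : R) ^ ℓ))
  rw [map_add, map_add, map_one, map_pow, map_pow] at h
  rw [pow_mul']
  exact pow_three_eq_one_of_one_add_add_eq_zero (mk_pow_mul_mk_inv_pow u ℓ _) h

theorem mk_pow_three_mul_eq_neg_one_mod_two_sub_one_add_pow_add_inv_pow :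
    Ideal.Quotient.mk (Ideal.span {2 - (1 + (u : R) ^ ℓ + ((u⁻¹ : Rˣ) : R) ^ ℓ)}) (u : R)
      ^ (3 * ℓ) = -1 := by
  have h := Ideal.Quotient.eq_zero_iff_mem.mpr
    (Ideal.mem_span_singleton_self (2 - (1 + (u : R) ^ ℓ + ((u⁻¹ : Rˣ) : R) ^ ℓ)))
  rw [map_sub, map_add, map_add, map_one, map_pow, map_pow, map_ofNat] at h
  rw [pow_mul']
  exact pow_three_eq_neg_one_of_add_eq_one (mk_pow_mul_mk_inv_pow u ℓ _)
    (by linear_combination -h)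

end Trinomial

theorem stmt_12 (n : ℕ) (p : ℕ) (hp : p = n ^ 2 + 3) (hpp : p.Prime)
    (K : Type*) [Field K]
    (u : (𝓞 K)ˣ)
    (ℓ : ℕ) (hℓodd : Odd ℓ)
    (del : 𝓞 K) (hdel : del = 1 + (u : 𝓞 K) ^ ℓ + ((u⁻¹ : (𝓞 K)ˣ) : 𝓞 K) ^ ℓ)
    (hcard : Nat.card (𝓞 K ⧸ Ideal.span {del}) = p) :
    ¬ IsSquare (Ideal.Quotient.mk (Ideal.span {del}) (-(u : 𝓞 K))) ∧
    IsSquare (Ideal.Quotient.mk (Ideal.span {2 - del}) (-(u : 𝓞 K))) := by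
  subst hdel
  have h3ℓ : Odd (3 * ℓ) := (by decide : Odd 3).mul hℓodd
  have hneg_one :
      ¬IsSquare (-1 : 𝓞 K ⧸ Ideal.span {1 + (u : 𝓞 K) ^ ℓ + ((u⁻¹ : (𝓞 K)ˣ) : 𝓞 K) ^ ℓ}) :=
    not_isSquare_neg_one_of_natCard_eq hpp hcard (hpp.mod_four_eq_three_of_eq_sq_add_three hp)
  rw [map_neg, map_neg]
  exact ⟨not_isSquare_neg_of_pow_eq_one hneg_one h3ℓ
      (mk_pow_three_mul_eq_one_mod_one_add_pow_add_inv_pow u ℓ),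
    isSquare_neg_of_pow_eq_neg_one h3ℓ
      (mk_pow_three_mul_eq_neg_one_mod_two_sub_one_add_pow_add_inv_pow u ℓ)⟩
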